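/- arXiv:2211.02818 — 7 statements merged into one kernel-verified Lean document; each statement's English description precedes it below -/
import Mathlib

section
/- For positive integers d and i, the number S_2(d,i) of partitions of the set {1,...,d} into i parts each of size at least 2 satisfies S_2(d,i) ≤ C(d,i) · i^(d-i) · 2^(-i), where C(d,i) is the binomial coefficient. -/
/-!
Double counting. A map `α → α` fixing a set `A` of size `i` pointwise and taking values in `A`
is determined by its values off `A`, so there are at most `C(n, i) * i ^ (n - i)` such maps with
`#A = i`. Choosing a point in every part of a partition into `i` parts of size at least `t` and
collapsing each part onto its chosen point gives such a map; there are at least `t ^ i` choices,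
and each partition is recovered as the kernel of the map.
-/

/-- `S2 d i` is the number of partitions of a `d`-element set into exactly `i`
blocks, each of size at least `2`. -/
def S2 (d i : ℕ) : ℕ :=
  (Finset.univ.filter fun P : Finset (Finset (Fin d)) =>
    P.card = i ∧ (∀ p ∈ P, 2 ≤ p.card) ∧
      ∀ v : Fin d, (P.filter fun p => v ∈ p).card = 1).card

open Finset Function

variable {α : Type*} [DecidableEq α]

lemma Finpartition.parts_eq_image_part {s : Finset α} (P : Finpartition s) :
    P.parts = s.image P.part := by
  ext p
  refine ⟨fun hp => ?_, fun hp => ?_⟩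
  · obtain ⟨v, hv⟩ := P.nonempty_of_mem_parts hp
    exact mem_image.2 ⟨v, P.subset hp hv, P.part_eq_of_mem hp hv⟩
  · obtain ⟨v, hv, rfl⟩ := mem_image.1 hp
    exact P.part_mem.2 hv

lemma Finpartition.filter_mem_parts_eq_singleton {s : Finset α} (P : Finpartition s) {v : α}
    (hv : v ∈ s) : {p ∈ P.parts | v ∈ p} = {P.part v} := by
  ext p
  simp only [mem_filter, mem_singleton]
  refine ⟨fun ⟨hp, hvp⟩ => (P.part_eq_of_mem hp hvp).symm, ?_⟩
  rintro rfl
  exact ⟨P.part_mem.2 hv, P.mem_part hv⟩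

variable [Fintype α]

def retractions (A : Finset α) : Finset (α → α) :=
  Fintype.piFinset fun v => if v ∈ A then {v} else A

lemma card_retractions (A : Finset α) : #(retractions A) = #A ^ (Fintype.card α - #A) := by
  rw [retractions, Fintype.card_piFinset, ← card_compl]
  simp [apply_ite card, prod_ite, filter_notMem_eq_sdiff, compl_eq_univ_sdiff]

lemma card_retractions_biUnion_le (i : ℕ) :
    #((powersetCard i (univ : Finset α)).biUnion retractions) ≤
      (Fintype.card α).choose i * i ^ (Fintype.card α - i) := by
  refine card_biUnion_le.trans_eq ?_
  rw [sum_congr rfl fun A hA => by rw [card_retractions, (mem_powersetCard.1 hA).2],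
    sum_const, card_powersetCard, card_univ, smul_eq_mul]

namespace Finpartition

variable {Q : Finpartition (univ : Finset α)}

def retract (Q : Finpartition (univ : Finset α)) (s : Q.parts → α) : α → α :=
  fun v => s ⟨Q.part v, Q.part_mem.2 (mem_univ v)⟩

lemma retract_apply_of_mem (s : Q.parts → α) {p : Q.parts} {v : α} (hv : v ∈ p.1) :
    Q.retract s v = s p :=
  congrArg s (Subtype.ext (Q.part_eq_of_mem p.2 hv))

variable {s : Q.parts → α}

lemma injective_of_forall_mem (hs : ∀ p, s p ∈ p.1) : Injective s := fun p q h =>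
  Subtype.ext (Q.eq_of_mem_parts p.2 q.2 (hs p) (h ▸ hs q))

lemma retract_eq_retract_iff (hs : ∀ p, s p ∈ p.1) {v w : α} :
    Q.retract s v = Q.retract s w ↔ Q.part v = Q.part w :=
  (injective_of_forall_mem hs).eq_iff.trans Subtype.ext_iff

lemma ofSetoid_ker_retract (hs : ∀ p, s p ∈ p.1) :
    ofSetoid (Setoid.ker (Q.retract s)) = Q := by
  ext1
  rw [Q.parts_eq_image_part]
  refine image_congr fun v _ => ?_
  ext w
  simp [Setoid.ker_def, retract_eq_retract_iff hs,
    Q.mem_part_iff_part_eq_part (mem_univ w) (mem_univ v), eq_comm]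

lemma retract_mem_retractions (hs : ∀ p, s p ∈ p.1) :
    Q.retract s ∈ retractions (univ.image s) := by
  refine Fintype.mem_piFinset.2 fun v => ?_
  split_ifs with hv
  · obtain ⟨p, -, rfl⟩ := mem_image.1 hv
    exact mem_singleton.2 (retract_apply_of_mem s (hs p))
  · exact mem_image_of_mem s (mem_univ _)

lemma injOn_retract : Set.InjOn Q.retract (Fintype.piFinset fun p : Q.parts => p.1) := by
  intro s hs s' _ h
  have hs : ∀ p, s p ∈ p.1 := Fintype.mem_piFinset.1 hs
  funext p
  rw [← retract_apply_of_mem s (hs p), ← retract_apply_of_mem s' (hs p), h]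

lemma pow_card_parts_le_card_filter_ofSetoid_ker {t : ℕ} (Q : Finpartition (univ : Finset α))
    (hQ : ∀ p ∈ Q.parts, t ≤ #p) :
    t ^ #Q.parts ≤ #{g ∈ (powersetCard #Q.parts univ).biUnion retractions |
      ofSetoid (Setoid.ker g) = Q} := by
  calc t ^ #Q.parts = t ^ Fintype.card Q.parts := by rw [Fintype.card_coe]
    _ ≤ ∏ p : Q.parts, #p.1 := pow_card_le_prod _ _ _ fun p _ => hQ p p.2
    _ = #(Fintype.piFinset fun p : Q.parts => p.1) := (Fintype.card_piFinset _).symm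
    _ ≤ _ := by
      refine card_le_card_of_injOn Q.retract (fun s hs => ?_) injOn_retract
      have hs : ∀ p, s p ∈ p.1 := Fintype.mem_piFinset.1 hs
      have hcard : #(univ.image s) = #Q.parts := by
        rw [card_image_of_injective _ (injective_of_forall_mem hs), card_univ, Fintype.card_coe]
      refine mem_filter.2 ⟨mem_biUnion.2 ⟨univ.image s, ?_, retract_mem_retractions hs⟩,
        ofSetoid_ker_retract hs⟩
      exact mem_powersetCard.2 ⟨subset_univ _, hcard⟩

end Finpartition

theorem card_finpartition_mul_pow_le (t i : ℕ) :
    #{Q : Finpartition (univ : Finset α) | #Q.parts = i ∧ ∀ p ∈ Q.parts, t ≤ #p} * t ^ i ≤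
      (Fintype.card α).choose i * i ^ (Fintype.card α - i) := by
  set T := (powersetCard i (univ : Finset α)).biUnion retractions
  rw [← smul_eq_mul, ← sum_const]
  calc _ ≤ ∑ Q ∈ _, #{g ∈ T | Finpartition.ofSetoid (Setoid.ker g) = Q} :=
        sum_le_sum fun Q hQ => ?_
    _ ≤ #T := (sum_card_fiberwise_eq_card_filter _ _ _).trans_le (card_filter_le _ _)
    _ ≤ _ := card_retractions_biUnion_le i
  obtain ⟨rfl, hparts⟩ := (mem_filter.1 hQ).2
  exact Q.pow_card_parts_le_card_filter_ofSetoid_ker hparts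

lemma S2_eq_card_finpartition (d i : ℕ) :
    S2 d i =
      #{Q : Finpartition (univ : Finset (Fin d)) | #Q.parts = i ∧ ∀ p ∈ Q.parts, 2 ≤ #p} := by
  symm
  refine card_bij (fun Q _ => Q.parts) (fun Q hQ => ?_) (fun _ _ _ _ => Finpartition.ext)
    fun P hP => ?_
  · obtain ⟨hcard, hsize⟩ := (mem_filter.1 hQ).2
    refine mem_filter.2 ⟨mem_univ _, hcard, hsize, fun v => ?_⟩
    rw [Q.filter_mem_parts_eq_singleton (mem_univ v), card_singleton]
  · obtain ⟨hcard, hsize, hunique⟩ := (mem_filter.1 hP).2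
    have hP : ∀ v ∈ univ, ∃! p, p ∈ P ∧ v ∈ p := fun v _ => by
      simpa using card_eq_one_iff_existsUnique.1 (hunique v)
    refine ⟨.ofExistsUnique P (fun _ _ => subset_univ _) hP fun h => ?_, ?_, rfl⟩
    · simpa using hsize ∅ h
    · exact mem_filter.2 ⟨mem_univ _, hcard, hsize⟩

theorem stmt_3_general (d i : ℕ) :
    (S2 d i : ℝ) ≤ (d.choose i : ℝ) * (i : ℝ) ^ (d - i) * (2 : ℝ) ^ (-(i : ℤ)) := by
  have h := card_finpartition_mul_pow_le (α := Fin d) 2 i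
  rw [← S2_eq_card_finpartition, Fintype.card_fin] at h
  rw [zpow_neg, zpow_natCast, ← div_eq_mul_inv, le_div_iff₀ (by positivity)]
  exact_mod_cast h

theorem stmt_3 (d i : ℕ) (hd : 0 < d) (hi : 0 < i) :
    (S2 d i : ℝ) ≤ (d.choose i : ℝ) * (i : ℝ) ^ (d - i) * (2 : ℝ) ^ (-(i : ℤ)) :=
  stmt_3_general d i
end

section
/- If d is a positive integer and β is a real number with d ≤ β (and d/β < 1), then the sum over i from 1 to ⌊d/2⌋ of S_2(d,i)·β^(i-d+1) is at most β · (d/β)^⌈d/2⌉ / (1 - d/β). -/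
open Finset

section NonFixedCode

variable {α : Type*} [LinearOrder α] [Fintype α]

def nonFixedPoints (f : α → α) : Finset α := univ.filter fun v => f v ≠ v

def nonFixedCode (f : α → α) : List α := ((nonFixedPoints f).sort (· ≤ ·)).map f

lemma length_nonFixedCode (f : α → α) : (nonFixedCode f).length = #(nonFixedPoints f) := by
  simp [nonFixedCode]

structure IsRetractionWithoutSingletonFibres (f : α → α) : Prop where
  idem : ∀ v, f (f v) = f v
  exists_ne_preimage : ∀ v, f v = v → ∃ w, w ≠ v ∧ f w = v

variable {f g : α → α}

lemma IsRetractionWithoutSingletonFibres.mem_nonFixedCode_iff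
    (hf : IsRetractionWithoutSingletonFibres f) (v : α) : v ∈ nonFixedCode f ↔ f v = v := by
  simp only [nonFixedCode, nonFixedPoints, List.mem_map, mem_sort, mem_filter, mem_univ, true_and]
  constructor
  · rintro ⟨w, -, rfl⟩
    exact hf.idem w
  · intro hv
    obtain ⟨w, hwv, hw⟩ := hf.exists_ne_preimage v hv
    exact ⟨w, hw ▸ hwv.symm, hw⟩

lemma IsRetractionWithoutSingletonFibres.eq_of_nonFixedCode_eq
    (hf : IsRetractionWithoutSingletonFibres f) (hg : IsRetractionWithoutSingletonFibres g)
    (h : nonFixedCode f = nonFixedCode g) : f = g := by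
  have hfix : ∀ v, f v = v ↔ g v = v := fun v => by
    rw [← hf.mem_nonFixedCode_iff, ← hg.mem_nonFixedCode_iff, h]
  have hnon : nonFixedPoints g = nonFixedPoints f := by
    ext v
    simp [nonFixedPoints, hfix]
  rw [nonFixedCode, nonFixedCode, hnon, List.map_inj_left] at h
  funext v
  by_cases hv : f v = v
  · rw [hv, (hfix v).1 hv]
  · exact h v (by simp [nonFixedPoints, hv])

end NonFixedCode

section BlockMin

variable {α : Type*} [LinearOrder α] (P : Finset (Finset α))

def block (v : α) : Finset α := (P.filter (v ∈ ·)).sup id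

def blockMin (v : α) : α := if h : (block P v).Nonempty then (block P v).min' h else v

variable {P} (hP : ∀ v : α, #(P.filter (v ∈ ·)) = 1)
include hP

lemma filter_mem_eq_singleton_block (v : α) : P.filter (v ∈ ·) = {block P v} := by
  obtain ⟨p, hp⟩ := card_eq_one.mp (hP v)
  rw [hp, block, hp, sup_singleton, id]

lemma block_mem_and_mem_block (v : α) : block P v ∈ P ∧ v ∈ block P v :=
  mem_filter.mp ((filter_mem_eq_singleton_block hP v).ge (mem_singleton_self _))

lemma block_mem (v : α) : block P v ∈ P := (block_mem_and_mem_block hP v).1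

lemma mem_block_self (v : α) : v ∈ block P v := (block_mem_and_mem_block hP v).2

lemma eq_block_of_mem {p : Finset α} {v : α} (hp : p ∈ P) (hv : v ∈ p) : p = block P v := by
  have : p ∈ P.filter (v ∈ ·) := mem_filter.mpr ⟨hp, hv⟩
  rwa [filter_mem_eq_singleton_block hP, mem_singleton] at this

lemma block_eq_of_mem_block {v w : α} (hw : w ∈ block P v) : block P w = block P v :=
  (eq_block_of_mem hP (block_mem hP v) hw).symm

lemma blockMin_eq_min' (v : α) : blockMin P v = (block P v).min' ⟨v, mem_block_self hP v⟩ :=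
  dif_pos _

lemma blockMin_mem_block (v : α) : blockMin P v ∈ block P v := by
  rw [blockMin_eq_min' hP]
  exact min'_mem _ _

lemma blockMin_eq_blockMin_iff {v w : α} : blockMin P w = blockMin P v ↔ w ∈ block P v := by
  constructor
  · intro h
    have hw := block_eq_of_mem_block hP (blockMin_mem_block hP w)
    have hv := block_eq_of_mem_block hP (blockMin_mem_block hP v)
    rw [← hv, ← h, hw]
    exact mem_block_self hP w
  · intro hw
    simp only [blockMin_eq_min' hP, block_eq_of_mem_block hP hw]

lemma blockMin_blockMin (v : α) : blockMin P (blockMin P v) = blockMin P v :=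
  (blockMin_eq_blockMin_iff hP).2 (blockMin_mem_block hP v)

lemma isRetractionWithoutSingletonFibres_blockMin (h2 : ∀ p ∈ P, 2 ≤ #p) :
    IsRetractionWithoutSingletonFibres (blockMin P) where
  idem := blockMin_blockMin hP
  exists_ne_preimage v hv := by
    obtain ⟨w, hw, hwv⟩ := exists_mem_ne (h2 _ (block_mem hP v)) v
    exact ⟨w, hwv, hv ▸ (blockMin_eq_blockMin_iff hP).2 hw⟩

variable [Fintype α] (hne : ∀ p ∈ P, p.Nonempty)
include hne

lemma eq_image_fibres_blockMin :
    P = univ.image fun v => univ.filter fun w => blockMin P w = blockMin P v := by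
  ext p
  simp only [blockMin_eq_blockMin_iff hP, filter_univ_mem, mem_image, mem_univ, true_and]
  constructor
  · intro hp
    obtain ⟨v, hv⟩ := hne p hp
    exact ⟨v, (eq_block_of_mem hP hp hv).symm⟩
  · rintro ⟨v, rfl⟩
    exact block_mem hP v

/-- Fixed points of `blockMin P` are the minima of the blocks, one per block. -/
lemma card_nonFixedPoints_blockMin :
    #(nonFixedPoints (blockMin P)) = Fintype.card α - #P := by
  have hfixed : #(univ.filter fun v => blockMin P v = v) = #P := by
    apply card_bij (fun v _ => block P v) (fun v _ => block_mem hP v)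
    · intro v hv w hw h
      simp only [mem_filter, mem_univ, true_and] at hv hw
      rw [← hv, ← hw, blockMin_eq_min' hP, blockMin_eq_min' hP]
      congr 1
    · intro p hp
      obtain ⟨v, hv⟩ := hne p hp
      refine ⟨blockMin P v, by simp [blockMin_blockMin hP], ?_⟩
      rw [block_eq_of_mem_block hP (blockMin_mem_block hP v), eq_block_of_mem hP hp hv]
  rw [← hfixed, ← card_univ, ← card_filter_add_card_filter_not (s := univ)
    (p := fun v => blockMin P v = v)]
  simp [nonFixedPoints]

end BlockMin

section PartitionCode

variable {α : Type*} [LinearOrder α] [Fintype α]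

lemma length_nonFixedCode_blockMin {P : Finset (Finset α)}
    (hP : ∀ v : α, #(P.filter (v ∈ ·)) = 1) (h2 : ∀ p ∈ P, 2 ≤ #p) :
    (nonFixedCode (blockMin P)).length = Fintype.card α - #P := by
  rw [length_nonFixedCode,
    card_nonFixedPoints_blockMin hP fun p hp => card_pos.mp (by linarith [h2 p hp])]

lemma injOn_nonFixedCode_blockMin :
    Set.InjOn (fun P => nonFixedCode (blockMin P))
      {P : Finset (Finset α) | (∀ p ∈ P, 2 ≤ #p) ∧ ∀ v : α, #(P.filter (v ∈ ·)) = 1} := by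
  rintro P ⟨hP2, hP⟩ Q ⟨hQ2, hQ⟩ hPQ
  have hmin : blockMin P = blockMin Q :=
    (isRetractionWithoutSingletonFibres_blockMin hP hP2).eq_of_nonFixedCode_eq
      (isRetractionWithoutSingletonFibres_blockMin hQ hQ2) hPQ
  rw [eq_image_fibres_blockMin hP fun p hp => card_pos.mp (by linarith [hP2 p hp]),
    eq_image_fibres_blockMin hQ fun p hp => card_pos.mp (by linarith [hQ2 p hp]), hmin]

end PartitionCode

theorem S2_le_pow (d i : ℕ) : S2 d i ≤ d ^ (d - i) := by
  classical
  calc S2 d i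
      ≤ #((univ : Finset (List.Vector (Fin d) (d - i))).image List.Vector.toList) := by
        refine card_le_card_of_injOn (fun P => nonFixedCode (blockMin P)) ?_ ?_
        · intro P hP
          obtain ⟨-, hcard, h2, hP⟩ := mem_filter.mp (mem_coe.mp hP)
          have hlength : (nonFixedCode (blockMin P)).length = d - i := by
            rw [length_nonFixedCode_blockMin hP h2, hcard, Fintype.card_fin]
          exact mem_image.mpr ⟨⟨_, hlength⟩, mem_univ _, rfl⟩
        · refine injOn_nonFixedCode_blockMin.mono fun P hP => ?_
          obtain ⟨-, -, h2, hP⟩ := mem_filter.mp (mem_coe.mp hP)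
          exact ⟨h2, hP⟩
    _ ≤ Fintype.card (List.Vector (Fin d) (d - i)) := card_image_le
    _ = d ^ (d - i) := by rw [card_vector, Fintype.card_fin]

lemma S2_mul_zpow_le (d i : ℕ) {β : ℝ} (hβ : 0 < β) (hi : i ≤ d) :
    (S2 d i : ℝ) * β ^ ((i : ℤ) - d + 1) ≤ β * ((d : ℝ) / β) ^ (d - i) := by
  have hexp : (i : ℤ) - d + 1 = 1 - ((d - i : ℕ) : ℤ) := by push_cast [hi]; ring
  calc (S2 d i : ℝ) * β ^ ((i : ℤ) - d + 1) ≤ (d : ℝ) ^ (d - i) * β ^ ((i : ℤ) - d + 1) := by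
        gcongr
        exact_mod_cast S2_le_pow d i
    _ = β * ((d : ℝ) / β) ^ (d - i) := by
        rw [hexp, zpow_sub₀ hβ.ne', zpow_one, zpow_natCast, div_pow]
        ring

theorem stmt_4_general (d : ℕ) (β : ℝ) (hβ : (d : ℝ) ≤ β)
    (hlt : (d : ℝ) / β < 1) :
    ∑ i ∈ Finset.Icc 1 (d / 2), (S2 d i : ℝ) * β ^ ((i : ℤ) - d + 1) ≤
      β * ((d : ℝ) / β) ^ ((d + 1) / 2) / (1 - (d : ℝ) / β) := by
  have hβ0 : 0 ≤ β := d.cast_nonneg.trans hβ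
  calc ∑ i ∈ Icc 1 (d / 2), (S2 d i : ℝ) * β ^ ((i : ℤ) - d + 1)
      ≤ ∑ i ∈ Icc 1 (d / 2), β * ((d : ℝ) / β) ^ (d - i) := by
        refine sum_le_sum fun i hi => S2_mul_zpow_le d i ?_ (by grind)
        have h2d : (2 : ℝ) ≤ d := by exact_mod_cast (by grind : 2 ≤ d)
        linarith
    _ = β * ∑ j ∈ Ico ((d + 1) / 2) d, ((d : ℝ) / β) ^ j := by
        have hreflect := sum_Ico_reflect (fun j => ((d : ℝ) / β) ^ j) 1 (n := d)
          (show d / 2 + 1 ≤ d + 1 by omega)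
        rw [show d + 1 - (d / 2 + 1) = (d + 1) / 2 by omega, Nat.add_sub_cancel] at hreflect
        rw [← mul_sum, ← Ico_add_one_right_eq_Icc, hreflect]
    _ ≤ β * (((d : ℝ) / β) ^ ((d + 1) / 2) / (1 - (d : ℝ) / β)) := by
        gcongr
        exact geom_sum_Ico_le_of_lt_one (div_nonneg d.cast_nonneg hβ0) hlt
    _ = β * ((d : ℝ) / β) ^ ((d + 1) / 2) / (1 - (d : ℝ) / β) := (mul_div_assoc _ _ _).symm

theorem stmt_4 (d : ℕ) (hd : 0 < d) (β : ℝ) (hβ : (d : ℝ) ≤ β)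
    (hlt : (d : ℝ) / β < 1) :
    ∑ i ∈ Finset.Icc 1 (d / 2), (S2 d i : ℝ) * β ^ ((i : ℤ) - d + 1) ≤
      β * ((d : ℝ) / β) ^ ((d + 1) / 2) / (1 - (d : ℝ) / β) :=
  stmt_4_general d β hβ hlt
end

section
/- Let β > 0 be real, and let d, i be positive integers with i ≤ d/3. Then C(d,3i) · (3i)!/(i!·6^i) · i^(d-3i) · β^(i-d+1) ≤ (β·d/e) · (d/β)^(d-i) · 0.549474^d. -/
/-!
Since `C(d,3i) (3i)! = d! / (d-3i)!`, the left-hand side without its `β`-factor is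
`K = d! i^(d-3i) / ((d-3i)! i! 6^i)`, and after cancelling `β` the claim is
`K ≤ d^(d-i+1) c^d / e` with `c = 0.549474`. Stirling's bounds (upper for `d!`, lower for
`(d-3i)!` and `i!`) give
`log K ≤ d · rate (i/d) + (d-i+1) log d - 1 + (4 - log (2π i d)) / 2`, where
`rate a = (1-4a) log a - (1-3a) log (1-3a) - 2a - a log 6`.
The constant `c` is `exp (max rate)` rounded up: the maximum is attained near `a₀ ≈ 0.2586`,
with slack only about `2.5e-6`, and it is certified by tangent-line bounds for `log a` at `0.2586`
and for `-u log u` at `u = 1 - 3a₀ ≈ 0.2242`. The error term is nonpositive once `di ≥ 10`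
(as `e⁴ < 20π`); the remaining cases `i = 1`, `d ≤ 9` are checked directly.
-/

open Real
open scoped Nat

lemma log_0_2586_mem_Ioo : -1.3524729 < log 0.2586 ∧ log 0.2586 < -1.3524728 := by
  have h := abs_log_sub_add_sum_range_le (x := -43 / 1250) (by norm_num [abs_div]) 6
  have e : log 0.2586 = log (1 - -43 / 1250) - 2 * log 2 := by
    rw [← log_rpow two_pos, ← log_div] <;> norm_num
  rw [abs_le] at h
  norm_num [Finset.sum_range_succ, abs_div] at h
  have := log_two_gt_d9
  have := log_two_lt_d9
  constructor <;> linarith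

lemma log_0_2242_gt : -1.4952168 < log 0.2242 := by
  have h := abs_log_sub_add_sum_range_le (x := 129 / 1250) (by norm_num [abs_div]) 9
  have e : log 0.2242 = log (1 - 129 / 1250) - 2 * log 2 := by
    rw [← log_rpow two_pos, ← log_div] <;> norm_num
  rw [abs_le] at h
  norm_num [Finset.sum_range_succ, abs_div] at h
  linarith [log_two_lt_d9]

lemma log_six_gt : 1.7917594 < log 6 := by
  have h := abs_log_sub_add_sum_range_le (x := 1 / 4) (by norm_num [abs_div]) 15
  have e : log 6 = log (1 - 1 / 4) + 3 * log 2 := by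
    rw [← log_rpow two_pos, ← log_mul] <;> norm_num
  rw [abs_le] at h
  norm_num [Finset.sum_range_succ, abs_div] at h
  linarith [log_two_gt_d9]

lemma log_0_549474_gt : -0.5987939 < log 0.549474 := by
  have h := abs_log_sub_add_sum_range_le (x := -24737 / 250000) (by norm_num [abs_div]) 9
  have e : log 0.549474 = log (1 - -24737 / 250000) - log 2 := by
    rw [← log_div] <;> norm_num
  rw [abs_le] at h
  norm_num [Finset.sum_range_succ, abs_div] at h
  linarith [log_two_lt_d9]

namespace Real

lemma log_le_log_add_div_sub_one {p x : ℝ} (hp : 0 < p) (hx : 0 < x) :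
    log x ≤ log p + x / p - 1 := by
  have := log_le_sub_one_of_pos (div_pos hx hp)
  rw [log_div hx.ne' hp.ne'] at this
  linarith

lemma log_add_one_sub_div_le_log {p x : ℝ} (hp : 0 < p) (hx : 0 < x) :
    log p + 1 - p / x ≤ log x := by
  linarith [log_le_log_add_div_sub_one hx hp]

lemma negMulLog_le_sub_mul_log_add_one {q u : ℝ} (hq : 0 < q) (hu : 0 ≤ u) :
    negMulLog u ≤ q - u * (log q + 1) := by
  rcases hu.eq_or_lt with rfl | hu
  · simpa using hq.le
  have := mul_le_mul_of_nonneg_left (log_add_one_sub_div_le_log hq hu) hu.le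
  rw [mul_sub, mul_div_cancel₀ _ hu.ne'] at this
  rw [negMulLog]
  linarith

end Real

noncomputable def rate (a : ℝ) : ℝ :=
  (1 - 4 * a) * log a + negMulLog (1 - 3 * a) - 2 * a - a * log 6

lemma mul_rate_div {x y : ℝ} (hx : 0 < x) (hy : 0 < y) :
    y * rate (x / y) = (y - 4 * x) * log x + x * log y + negMulLog (y - 3 * x) - 2 * x
      - x * log 6 := by
  obtain ⟨a, rfl⟩ : ∃ a, x = a * y := ⟨x / y, (div_mul_cancel₀ x hy.ne').symm⟩
  have ha : 0 < a := pos_of_mul_pos_left hx hy.le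
  rw [mul_div_cancel_right₀ a hy.ne', log_mul ha.ne' hy.ne',
    show y - 3 * (a * y) = (1 - 3 * a) * y by ring, negMulLog_mul, rate]
  simp only [negMulLog]
  ring

lemma negMulLog_le_tangent_0_2242 {u : ℝ} (hu : 0 ≤ u) : negMulLog u ≤ 0.2242 + 0.4952168 * u := by
  have := negMulLog_le_sub_mul_log_add_one (by norm_num : (0 : ℝ) < 0.2242) hu
  nlinarith [log_0_2242_gt]

lemma rate_le_of_le_quarter {a : ℝ} (ha : 0 < a) (ha4 : a ≤ 1 / 4) :
    rate a ≤ log 0.549474 := by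
  have hlog : (1 - 4 * a) * log a ≤ (1 - 4 * a) * (-1.3524728 + a / 0.2586 - 1) := by
    refine mul_le_mul_of_nonneg_left ?_ (by linarith)
    linarith [log_le_log_add_div_sub_one (by norm_num : (0 : ℝ) < 0.2586) ha,
      log_0_2586_mem_Ioo.2]
  have hneg := negMulLog_le_tangent_0_2242 (by linarith : 0 ≤ 1 - 3 * a)
  have h6 : a * 1.7917594 ≤ a * log 6 := mul_le_mul_of_nonneg_left log_six_gt.le ha.le
  -- this quadratic increases on `[0, 1/4]`
  have hquad : (1 - 4 * a) * (-1.3524728 + a / 0.2586 - 1) + (0.2242 + 0.4952168 * (1 - 3 * a))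
      - 2 * a - a * 1.7917594 ≤ -0.5987939 := by
    norm_num
    nlinarith [sq_nonneg (1 / 4 - a)]
  rw [rate]
  linarith [log_0_549474_gt]

lemma rate_le_of_quarter_le {a : ℝ} (ha4 : 1 / 4 ≤ a) (ha3 : a ≤ 1 / 3) :
    rate a ≤ log 0.549474 := by
  have ha : 0 < a := by linarith
  have hlog : (1 - 4 * a) * log a ≤ (1 - 4 * a) * (-1.3524729 + 1 - 0.2586 / a) := by
    refine mul_le_mul_of_nonpos_left ?_ (by linarith)
    linarith [log_add_one_sub_div_le_log (by norm_num : (0 : ℝ) < 0.2586) ha,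
      log_0_2586_mem_Ioo.1]
  have hneg := negMulLog_le_tangent_0_2242 (by linarith : 0 ≤ 1 - 3 * a)
  have h6 : a * 1.7917594 ≤ a * log 6 := mul_le_mul_of_nonneg_left log_six_gt.le ha.le
  have hquad : a * ((1 - 4 * a) * (-1.3524729 + 1 - 0.2586 / a)
      + (0.2242 + 0.4952168 * (1 - 3 * a)) - 2 * a - a * 1.7917594 + 0.5987939) ≤ 0 := by
    have : a * (0.2586 / a) = 0.2586 := mul_div_cancel₀ _ ha.ne'
    nlinarith [sq_nonneg (a - 0.2586)]
  have := nonpos_of_mul_nonpos_right hquad ha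
  rw [rate]
  linarith [log_0_549474_gt]

lemma rate_le {a : ℝ} (ha : 0 < a) (ha3 : a ≤ 1 / 3) : rate a ≤ log 0.549474 := by
  rcases le_total a (1 / 4) with h | h
  · exact rate_le_of_le_quarter ha h
  · exact rate_le_of_quarter_le h ha3

lemma log_factorial_le {n : ℕ} (hn : n ≠ 0) : log n ! ≤ n * log n - n + log n / 2 + 1 := by
  obtain ⟨m, rfl⟩ := Nat.exists_eq_succ_of_ne_zero hn
  have hle : Stirling.stirlingSeq (m + 1) ≤ exp 1 / √2 := by
    simpa using Stirling.stirlingSeq'_antitone (Nat.zero_le m)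
  have hlog := log_le_log (Stirling.stirlingSeq'_pos m) hle
  have hn0 : (0 : ℝ) < (m + 1 : ℕ) := by positivity
  rw [Stirling.log_stirlingSeq_formula, log_div (exp_ne_zero 1) (by positivity), log_exp,
    log_sqrt zero_le_two, log_mul two_ne_zero hn0.ne', log_div hn0.ne' (exp_ne_zero 1),
    log_exp] at hlog
  linarith

lemma mul_log_sub_le_log_factorial (n : ℕ) : n * log n - n ≤ log n ! := by
  rcases eq_or_ne n 0 with rfl | hn
  · simp
  have := Stirling.le_log_factorial_stirling hn
  have : 0 ≤ log (n : ℝ) := log_natCast_nonneg n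
  have : 0 ≤ log (2 * π) := log_nonneg (by linarith [pi_gt_three])
  linarith

lemma four_le_log_two_pi_mul {x : ℝ} (hx : 10 ≤ x) : 4 ≤ log (2 * π * x) := by
  have he : exp 4 < 2.7182818286 ^ 4 := by
    rw [show (4 : ℝ) = (4 : ℕ) * 1 by norm_num, exp_nat_mul]
    exact pow_lt_pow_left₀ exp_one_lt_d9 (exp_pos 1).le (by norm_num)
  rw [le_log_iff_exp_le (by nlinarith [pi_gt_three])]
  nlinarith [pi_gt_three]

lemma choose_mul_factorial_div_eq {d i : ℕ} (h3i : 3 * i ≤ d) :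
    (d.choose (3 * i) : ℝ) * ((3 * i)! / (i ! * 6 ^ i)) * (i : ℝ) ^ (d - 3 * i) =
      d ! * (i : ℝ) ^ (d - 3 * i) / ((d - 3 * i)! * (i ! * 6 ^ i)) := by
  rw [← Nat.choose_mul_factorial_mul_factorial h3i]
  push_cast
  field_simp

lemma log_factorial_mul_pow_div_le {d i : ℕ} (hi : 0 < i) (h3i : 3 * i ≤ d) :
    log (d ! * (i : ℝ) ^ (d - 3 * i) / ((d - 3 * i)! * (i ! * 6 ^ i))) ≤
      d * rate (i / d) + (d - i) * log d + (log d - log (2 * π * i)) / 2 + 1 := by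
  have hi' : (0 : ℝ) < i := by exact_mod_cast hi
  have hd : (0 : ℝ) < d := by exact_mod_cast hi.trans_le (by omega : i ≤ d)
  have hsub : ((d - 3 * i : ℕ) : ℝ) = d - 3 * i := by rw [Nat.cast_sub h3i]; push_cast; ring
  have hd! := log_factorial_le (n := d) (by omega)
  have hsub! := mul_log_sub_le_log_factorial (d - 3 * i)
  have hi! := Stirling.le_log_factorial_stirling hi.ne'
  rw [hsub] at hsub!
  have hpow : (i : ℝ) ^ (d - 3 * i) ≠ 0 := (pow_pos hi' _).ne'
  rw [log_div (mul_ne_zero (by positivity) hpow) (by positivity),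
    log_mul (by positivity) hpow, log_mul (by positivity) (by positivity),
    log_mul (by positivity) (by positivity), log_pow, log_pow, hsub, mul_rate_div hi' hd,
    log_mul (by positivity) hi'.ne', negMulLog]
  linarith

lemma choose_mul_factorial_div_mul_pow_le_of_ten_le {d i : ℕ} (hi : 0 < i) (h3i : 3 * i ≤ d)
    (h10 : 10 ≤ d * i) :
    (d.choose (3 * i) : ℝ) * ((3 * i)! / (i ! * 6 ^ i)) * (i : ℝ) ^ (d - 3 * i) ≤
      (d : ℝ) ^ (d - i) * d * 0.549474 ^ d / exp 1 := by
  have hd : (0 : ℝ) < d := by exact_mod_cast hi.trans_le (by omega : i ≤ d)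
  have hrate : d * rate (i / d) ≤ d * log 0.549474 := by
    have : (3 * i : ℝ) ≤ d := by exact_mod_cast h3i
    refine mul_le_mul_of_nonneg_left (rate_le (by positivity) ?_) hd.le
    rw [div_le_iff₀ hd]
    linarith
  have h4 : 4 ≤ log (2 * π * i) + log d := by
    rw [← log_mul (by positivity) hd.ne', mul_assoc]
    exact four_le_log_two_pi_mul (by rw [mul_comm]; exact_mod_cast h10)
  rw [choose_mul_factorial_div_eq h3i, ← log_le_log_iff (by positivity) (by positivity)]
  refine (log_factorial_mul_pow_div_le hi h3i).trans ?_
  rw [log_div (by positivity) (exp_ne_zero 1),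
    log_mul (x := (d : ℝ) ^ (d - i) * d) (by positivity) (by positivity),
    log_mul (by positivity) hd.ne', log_pow, log_pow, log_exp, Nat.cast_sub (by omega)]
  linarith

theorem choose_mul_factorial_div_mul_pow_le {d i : ℕ} (hi : 0 < i) (h3i : 3 * i ≤ d) :
    (d.choose (3 * i) : ℝ) * ((3 * i)! / (i ! * 6 ^ i)) * (i : ℝ) ^ (d - 3 * i) ≤
      (d : ℝ) ^ (d - i) * d * 0.549474 ^ d / exp 1 := by
  by_cases h10 : 10 ≤ d * i
  · exact choose_mul_factorial_div_mul_pow_le_of_ten_le hi h3i h10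
  obtain rfl : i = 1 := by nlinarith
  have hd9 : d ≤ 9 := by omega
  rw [le_div_iff₀ (exp_pos 1)]
  interval_cases d <;> norm_num [Nat.choose, Nat.factorial] <;> nlinarith [exp_one_lt_d9]

theorem stmt_7_general (β : ℝ) (hβ : 0 < β) (d i : ℕ) (hi : 0 < i)
    (h3i : 3 * i ≤ d) :
    (d.choose (3 * i) : ℝ) * ((3 * i).factorial / (i.factorial * 6 ^ i)) *
        (i : ℝ) ^ (d - 3 * i) * β ^ ((i : ℤ) - d + 1) ≤
      (β * d / Real.exp 1) * ((d : ℝ) / β) ^ (d - i) * 0.549474 ^ d := by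
  have hβpow : β ^ ((i : ℤ) - d + 1) = β / β ^ (d - i) := by
    rw [show (i : ℤ) - d + 1 = 1 - ((d - i : ℕ) : ℤ) by omega, zpow_sub₀ hβ.ne', zpow_one,
      zpow_natCast]
  calc _ ≤ (d : ℝ) ^ (d - i) * d * 0.549474 ^ d / exp 1 * (β / β ^ (d - i)) := by
        rw [hβpow]
        exact mul_le_mul_of_nonneg_right (choose_mul_factorial_div_mul_pow_le hi h3i)
          (by positivity)
    _ = _ := by
        rw [div_pow]
        field_simp

theorem stmt_7 (β : ℝ) (hβ : 0 < β) (d i : ℕ) (hd : 0 < d) (hi : 0 < i)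
    (h3i : 3 * i ≤ d) :
    (d.choose (3 * i) : ℝ) * ((3 * i).factorial / (i.factorial * 6 ^ i)) *
        (i : ℝ) ^ (d - 3 * i) * β ^ ((i : ℤ) - d + 1) ≤
      (β * d / Real.exp 1) * ((d : ℝ) / β) ^ (d - i) * 0.549474 ^ d :=
  stmt_7_general β hβ d i hi h3i
end

section
/- Let β > 0 be real, and let d, i, j be integers with i > j > 0, d - 3i + j = 0, and β ≥ 0.6d. Then C(d,2j) · (2j)!/(j!·2^j) · C(d-2j, 3(i-j)) · (3(i-j))!/((i-j)!·6^(i-j)) · β^(i-d+1) < (d·β/e) · 0.9126^d. -/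
/-!
With `k = i - j` we have `d = 2j + 3k`, and the left side collapses to
`d! β / (j! 2^j k! 6^k β^(j+2k))`. Since `β ≥ 0.6 d`, it suffices to show
`d! e < j! 2^j k! 6^k d 0.9126^d (0.6 d)^(j+2k)`. Stirling's bounds (from above for `d!`, from below
for `j!` and `k!`) reduce this to `d^(j+k) ≤ 2^j 6^k 0.9126^d 0.6^(j+2k) e^(j+2k) j^j k^k`, which is
the product of the tangent-line bounds `x^m ≤ m^m e^(x-m)` at `x = s d, m = j` and `x = t d, m = k`
for suitable slopes `s, t`; at `0.9126` these leave almost no slack.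
-/

open Real Nat

lemma pow_le_pow_mul_exp_sub {x : ℝ} (hx : 0 ≤ x) (m : ℕ) : x ^ m ≤ m ^ m * exp (x - m) := by
  rcases Nat.eq_zero_or_pos m with rfl | hm
  · simpa using one_le_exp hx
  have hm0 : (0 : ℝ) < m := by exact_mod_cast hm
  calc x ^ m = (x / m) ^ m * m ^ m := by rw [div_pow, div_mul_cancel₀ _ (by positivity)]
    _ ≤ exp (x / m - 1) ^ m * m ^ m := by
        gcongr; linarith [add_one_le_exp (x / m - 1)]
    _ = m ^ m * exp (x - m) := by
        rw [← exp_nat_mul, mul_comm]; congr 2; field_simp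

lemma sqrt_two_pi_mul_mul_pow_le_factorial_mul_exp (n : ℕ) :
    √(2 * π * n) * n ^ n ≤ n ! * exp 1 ^ n := by
  have h := mul_le_mul_of_nonneg_right (Stirling.le_factorial_stirling n)
    (pow_nonneg (exp_pos 1).le n)
  rwa [mul_assoc, ← mul_pow, div_mul_cancel₀ _ (exp_ne_zero 1)] at h

lemma factorial_mul_exp_le_exp_mul_sqrt_mul_pow {n : ℕ} (hn : n ≠ 0) :
    n ! * exp 1 ^ n ≤ exp 1 * √n * n ^ n := by
  have h : Stirling.stirlingSeq n ≤ exp 1 / √2 := by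
    obtain ⟨m, rfl⟩ := Nat.exists_eq_succ_of_ne_zero hn
    simpa [Stirling.stirlingSeq_one] using Stirling.stirlingSeq'_antitone (Nat.zero_le m)
  rw [Stirling.stirlingSeq, div_le_iff₀ (by positivity)] at h
  calc (n ! : ℝ) * exp 1 ^ n ≤ exp 1 / √2 * (√(2 * n) * (n / exp 1) ^ n) * exp 1 ^ n := by
        gcongr
    _ = exp 1 * √n * n ^ n := by
        rw [sqrt_mul zero_le_two, div_pow]; field_simp

lemma one_le_pairs_tangent_const : (1 : ℝ) ≤ 2 * 0.9126 ^ 2 * 0.6 * 0.32829 * exp 1.114474 := by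
  have h := sum_le_exp_of_nonneg (x := 1.114474) (by norm_num) 13
  simp only [Finset.sum_range_succ, Finset.sum_range_zero, Nat.factorial] at h
  norm_num at h
  nlinarith

lemma one_le_triples_tangent_const :
    (1 : ℝ) ≤ 6 * 0.9126 ^ 3 * 0.6 ^ 2 * 0.114473 * exp 1.671711 := by
  have h := sum_le_exp_of_nonneg (x := 1.671711) (by norm_num) 16
  simp only [Finset.sum_range_succ, Finset.sum_range_zero, Nat.factorial] at h
  norm_num at h
  nlinarith

lemma two_mul_add_three_mul_pow_le (j k : ℕ) :
    (2 * j + 3 * k : ℝ) ^ (j + k) ≤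
      2 ^ j * 6 ^ k * 0.9126 ^ (2 * j + 3 * k) * 0.6 ^ (j + 2 * k) * exp 1 ^ (j + 2 * k) *
        j ^ j * k ^ k := by
  obtain ⟨D, hD⟩ : ∃ D : ℝ, D = 2 * j + 3 * k := ⟨_, rfl⟩
  obtain ⟨s, hs⟩ : ∃ s : ℝ, s = 0.32829 := ⟨_, rfl⟩
  obtain ⟨t, ht⟩ : ∃ t : ℝ, t = 0.114473 := ⟨_, rfl⟩
  rw [← hD]
  have hD0 : 0 ≤ D := hD ▸ by positivity
  have hs0 : 0 < s := hs ▸ by norm_num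
  have ht0 : 0 < t := ht ▸ by norm_num
  have hst : (0 : ℝ) < s ^ j * t ^ k := by positivity
  -- `1.114474 = 2 - 2 (s + t)` and `1.671711 = 3 - 3 (s + t)`
  have hexp : exp (s * D - j) * exp (t * D - k) * exp 1.114474 ^ j * exp 1.671711 ^ k =
      exp 1 ^ (j + 2 * k) := by
    simp only [← exp_nat_mul, ← exp_add]
    congr 1
    rw [hD, hs, ht]
    push_cast
    ring
  refine le_of_mul_le_mul_left ?_ hst
  calc s ^ j * t ^ k * D ^ (j + k) = (s * D) ^ j * (t * D) ^ k := by ring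
    _ ≤ (j ^ j * exp (s * D - j)) * (k ^ k * exp (t * D - k)) := by
        gcongr <;> exact pow_le_pow_mul_exp_sub (by positivity) _
    _ ≤ (j ^ j * exp (s * D - j)) * (k ^ k * exp (t * D - k)) *
          ((2 * 0.9126 ^ 2 * 0.6 * s * exp 1.114474) ^ j *
            (6 * 0.9126 ^ 3 * 0.6 ^ 2 * t * exp 1.671711) ^ k) := by
        refine le_mul_of_one_le_right (by positivity) (one_le_mul_of_one_le_of_one_le ?_ ?_)
        · exact one_le_pow₀ (hs ▸ one_le_pairs_tangent_const)
        · exact one_le_pow₀ (ht ▸ one_le_triples_tangent_const)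
    _ = s ^ j * t ^ k * (2 ^ j * 6 ^ k * 0.9126 ^ (2 * j + 3 * k) * 0.6 ^ (j + 2 * k) *
          exp 1 ^ (j + 2 * k) * j ^ j * k ^ k) := by
        rw [← hexp]
        generalize (0.9126 : ℝ) = c
        generalize (0.6 : ℝ) = p
        ring

lemma exp_one_sq_lt_sqrt_two_pi_mul_sqrt_two_pi_mul_sqrt {j k d : ℕ} (hj : j ≠ 0) (hk : k ≠ 0)
    (hd : 4 ≤ d) : exp 1 ^ 2 < √(2 * π * j) * √(2 * π * k) * √d := by
  have hj1 : √(2 * π) ≤ √(2 * π * j) := sqrt_le_sqrt <|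
    le_mul_of_one_le_right (by positivity) (by exact_mod_cast Nat.one_le_iff_ne_zero.mpr hj)
  have hk1 : √(2 * π) ≤ √(2 * π * k) := sqrt_le_sqrt <|
    le_mul_of_one_le_right (by positivity) (by exact_mod_cast Nat.one_le_iff_ne_zero.mpr hk)
  have hd2 : 2 ≤ √d := le_sqrt_of_sq_le (by norm_num; exact_mod_cast hd)
  calc exp 1 ^ 2 < 2 * π * 2 := by nlinarith [exp_one_lt_d9, exp_pos 1, pi_gt_three]
    _ = √(2 * π) * √(2 * π) * 2 := by rw [mul_self_sqrt (by positivity)]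
    _ ≤ √(2 * π * j) * √(2 * π * k) * √d := by gcongr

lemma factorial_mul_exp_one_lt {d j k : ℕ} (hd : d = 2 * j + 3 * k) (hj : j ≠ 0) (hk : k ≠ 0) :
    (d ! : ℝ) * exp 1 <
      j ! * 2 ^ j * (k ! * 6 ^ k) * d * 0.9126 ^ d * (0.6 * d) ^ (j + 2 * k) := by
  set E := exp 1
  set T : ℝ := 2 ^ j * 6 ^ k * 0.9126 ^ d * 0.6 ^ (j + 2 * k) * E ^ (j + 2 * k) * j ^ j * k ^ k
  have hT : (d : ℝ) ^ (j + k) ≤ T := by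
    convert two_mul_add_three_mul_pow_le j k using 3 <;> subst hd <;> push_cast <;> ring
  have hdE : E ^ d = E ^ j * E ^ k * E ^ (j + 2 * k) := by rw [hd]; ring
  have hdd : (d : ℝ) ^ d = d ^ (j + k) * d ^ (j + 2 * k) := by rw [hd]; ring
  have hd0 : 0 < d := by omega
  refine lt_of_mul_lt_mul_right ?_ (pow_nonneg (exp_pos 1).le d)
  calc (d ! : ℝ) * E * E ^ d = d ! * E ^ d * E := by ring
    _ ≤ E * √d * d ^ d * E :=
        mul_le_mul_of_nonneg_right (factorial_mul_exp_le_exp_mul_sqrt_mul_pow hd0.ne')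
          (exp_pos 1).le
    _ = E ^ 2 * (√d * d ^ (j + k) * d ^ (j + 2 * k)) := by rw [hdd]; ring
    _ ≤ E ^ 2 * (√d * T * d ^ (j + 2 * k)) := by gcongr
    _ < (√(2 * π * j) * √(2 * π * k) * √d) * (√d * T * d ^ (j + 2 * k)) := by
        refine mul_lt_mul_of_pos_right
          (exp_one_sq_lt_sqrt_two_pi_mul_sqrt_two_pi_mul_sqrt hj hk (by omega)) ?_
        positivity
    _ = √(2 * π * j) * √(2 * π * k) * (√d * √d) * T * d ^ (j + 2 * k) := by ring
    _ = (√(2 * π * j) * j ^ j) * 2 ^ j * ((√(2 * π * k) * k ^ k) * 6 ^ k) * d * 0.9126 ^ d *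
          (0.6 * d) ^ (j + 2 * k) * E ^ (j + 2 * k) := by
        rw [mul_self_sqrt d.cast_nonneg, mul_pow]; ring
    _ ≤ (j ! * E ^ j) * 2 ^ j * ((k ! * E ^ k) * 6 ^ k) * d * 0.9126 ^ d *
          (0.6 * d) ^ (j + 2 * k) * E ^ (j + 2 * k) := by
        gcongr ?_ * _ * (?_ * _) * _ * _ * _ * _ <;>
          exact sqrt_two_pi_mul_mul_pow_le_factorial_mul_exp _
    _ = j ! * 2 ^ j * (k ! * 6 ^ k) * d * 0.9126 ^ d * (0.6 * d) ^ (j + 2 * k) * E ^ d := by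
        rw [hdE]; ring

lemma choose_mul_pairings_mul_triplings {d j k : ℕ} (hd : d = 2 * j + 3 * k) :
    (d.choose (2 * j) : ℝ) * ((2 * j)! / (j ! * 2 ^ j)) * ((3 * k)! / (k ! * 6 ^ k)) =
      d ! / (j ! * 2 ^ j * (k ! * 6 ^ k)) := by
  rw [Nat.cast_choose ℝ (by omega : 2 * j ≤ d), show d - 2 * j = 3 * k by omega]
  field_simp

theorem stmt_8_general (β : ℝ) (d i j : ℕ) (hj : 0 < j) (hij : j < i)
    (hd : (d : ℤ) - 3 * i + j = 0) (hβd : β ≥ 0.6 * d) :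
    (d.choose (2 * j) : ℝ) * ((2 * j).factorial / (j.factorial * 2 ^ j)) *
        ((d - 2 * j).choose (3 * (i - j)) : ℝ) *
        ((3 * (i - j)).factorial / ((i - j).factorial * 6 ^ (i - j))) *
        β ^ ((i : ℤ) - d + 1) <
      (d * β / Real.exp 1) * 0.9126 ^ d := by
  obtain ⟨k, rfl⟩ : ∃ k, i = j + k := ⟨i - j, by omega⟩
  have hdjk : d = 2 * j + 3 * k := by omega
  have hβ : 0 < β := lt_of_lt_of_le (by norm_num; omega) hβd
  have hexp : ((j + k : ℕ) : ℤ) - d + 1 = 1 - (j + 2 * k : ℕ) := by push_cast; omega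
  rw [Nat.add_sub_cancel_left, show d - 2 * j = 3 * k by omega, Nat.choose_self, Nat.cast_one,
    mul_one, choose_mul_pairings_mul_triplings hdjk, hexp, zpow_sub₀ hβ.ne', zpow_one, zpow_natCast,
    ← mul_div_assoc, div_mul_eq_mul_div, div_div, div_lt_iff₀ (by positivity)]
  have hβpow : (0.6 * d : ℝ) ^ (j + 2 * k) ≤ β ^ (j + 2 * k) :=
    pow_le_pow_left₀ (by positivity) hβd _
  calc (d ! : ℝ) * β = d ! * exp 1 * (β / exp 1) := by field_simp
    _ < j ! * 2 ^ j * (k ! * 6 ^ k) * d * 0.9126 ^ d * (0.6 * d) ^ (j + 2 * k) * (β / exp 1) := by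
        gcongr ?_ * _
        exact factorial_mul_exp_one_lt hdjk hj.ne' (by omega)
    _ ≤ j ! * 2 ^ j * (k ! * 6 ^ k) * d * 0.9126 ^ d * β ^ (j + 2 * k) * (β / exp 1) := by
        gcongr
    _ = d * β / exp 1 * 0.9126 ^ d * (j ! * 2 ^ j * (k ! * 6 ^ k) * β ^ (j + 2 * k)) := by ring

theorem stmt_8 (β : ℝ) (hβ : 0 < β) (d i j : ℕ) (hj : 0 < j) (hij : j < i)
    (hd : (d : ℤ) - 3 * i + j = 0) (hβd : β ≥ 0.6 * d) :
    (d.choose (2 * j) : ℝ) * ((2 * j).factorial / (j.factorial * 2 ^ j)) *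
        ((d - 2 * j).choose (3 * (i - j)) : ℝ) *
        ((3 * (i - j)).factorial / ((i - j).factorial * 6 ^ (i - j))) *
        β ^ ((i : ℤ) - d + 1) <
      (d * β / Real.exp 1) * 0.9126 ^ d :=
  stmt_8_general β d i j hj hij hd hβd
end

section
/- If x and y are real numbers with 0 < x < 0.5 and max{3x-1, 0} < y < x, then ((x-y)/(1-3x+y)) · ((1-3x+y)/(e·(x-y)^2))^(2x-y) · ((1-3x+y)/6)^(x-y) · ((1-3x+y)/(2y))^y < 0.7524. -/
/-!
Put `a = x - y` and `t = y`, so that `1 - 3x + y = 1 - 3a - 2t =: c`. The logarithm of the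
left-hand side is
  `logF a t = log a - c log c - (2a + t) - 2(2a + t) log a - a log 6 - t log 2 - t log t`,
which is concave on the triangle `a, t, c > 0`: along a line with direction `(u, v)` its second
derivative is `-((3u + 2v + cu/a)² / c + u²/a + v²/t)`. So `logF` lies below each of its tangent
planes. At `(p₀, q₀)`, a rational point very close to the maximiser, the gradient is below `2·10⁻⁶`
while `logF p₀ q₀ < -0.2845002`, which is `1.3·10⁻⁵` below `log 0.7524`; as the triangle is bounded,
the tangent plane stays below `log 0.7524` on all of it.
-/

open Real Set

noncomputable def logF (a t : ℝ) : ℝ :=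
  log a - (1 - 3 * a - 2 * t) * log (1 - 3 * a - 2 * t) - (2 * a + t) - 2 * (2 * a + t) * log a
    - a * log 6 - t * log 2 - t * log t

noncomputable def logFPartialA (a t : ℝ) : ℝ :=
  (1 - 2 * t) / a + 3 * log (1 - 3 * a - 2 * t) - 3 - 4 * log a - log 6

noncomputable def logFPartialT (a t : ℝ) : ℝ :=
  2 * log (1 - 3 * a - 2 * t) - 2 * log a - log 2 - log t

lemma exp_logF {a t : ℝ} (ha : 0 < a) (ht : 0 < t) (hc : 0 < 1 - 3 * a - 2 * t) :
    exp (logF a t) = a / (1 - 3 * a - 2 * t) *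
      ((1 - 3 * a - 2 * t) / (exp 1 * a ^ 2)) ^ (2 * a + t) *
      ((1 - 3 * a - 2 * t) / 6) ^ a * ((1 - 3 * a - 2 * t) / (2 * t)) ^ t := by
  rw [rpow_def_of_pos (by positivity), rpow_def_of_pos (by positivity),
    rpow_def_of_pos (by positivity), ← exp_log (by positivity : 0 < a / (1 - 3 * a - 2 * t)),
    ← exp_add, ← exp_add, ← exp_add]
  congr 1
  rw [log_div ha.ne' hc.ne', log_div hc.ne' (by positivity), log_mul (by positivity) (by positivity),
    log_exp, log_pow, log_div hc.ne' (by norm_num), log_div hc.ne' (by positivity),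
    log_mul two_ne_zero ht.ne']
  unfold logF
  push_cast
  ring

section Curve

variable {f g : ℝ → ℝ} {u v s : ℝ}

lemma hasDerivAt_one_sub_three_mul_sub_two_mul (hf : HasDerivAt f u s) (hg : HasDerivAt g v s) :
    HasDerivAt (fun s => 1 - 3 * f s - 2 * g s) (-(3 * u + 2 * v)) s :=
  (((hf.const_mul 3).const_sub 1).sub (hg.const_mul 2)).congr_deriv (by ring)

theorem hasDerivAt_logF_comp (hf : HasDerivAt f u s) (hg : HasDerivAt g v s) (hf0 : 0 < f s)
    (hg0 : 0 < g s) (hc : 0 < 1 - 3 * f s - 2 * g s) :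
    HasDerivAt (fun s => logF (f s) (g s))
      (logFPartialA (f s) (g s) * u + logFPartialT (f s) (g s) * v) s := by
  have hc' := hasDerivAt_one_sub_three_mul_sub_two_mul hf hg
  have hw : HasDerivAt (fun s => 2 * f s + g s) (2 * u + v) s := (hf.const_mul 2).add hg
  refine ((((((hf.log hf0.ne').sub (hc'.mul (hc'.log hc.ne'))).sub hw).sub
    ((hw.const_mul 2).mul (hf.log hf0.ne'))).sub (hf.mul_const (log 6))).sub
    (hg.mul_const (log 2))).sub (hg.mul (hg.log hg0.ne')) |>.congr_deriv ?_
  simp only [logFPartialA, logFPartialT]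
  set c := 1 - 3 * f s - 2 * g s with hc_def
  have := hc.ne'
  field_simp
  rw [hc_def]
  ring

theorem hasDerivAt_logFPartial_directional (hf : HasDerivAt f u s) (hg : HasDerivAt g v s)
    (hf0 : 0 < f s) (hg0 : 0 < g s) (hc : 0 < 1 - 3 * f s - 2 * g s) :
    HasDerivAt (fun s => logFPartialA (f s) (g s) * u + logFPartialT (f s) (g s) * v)
      (-((3 * u + 2 * v + (1 - 3 * f s - 2 * g s) * u / f s) ^ 2 / (1 - 3 * f s - 2 * g s)
        + u ^ 2 / f s + v ^ 2 / g s)) s := by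
  have hc' := hasDerivAt_one_sub_three_mul_sub_two_mul hf hg
  have hlc := hc'.log hc.ne'
  have hlf := hf.log hf0.ne'
  have hA := ((((((hg.const_mul 2).const_sub 1).div hf hf0.ne').add
    (hlc.const_mul 3)).sub_const 3).sub (hlf.const_mul 4)).sub_const (log 6)
  have hT := (((hlc.const_mul 2).sub (hlf.const_mul 2)).sub_const (log 2)).sub (hg.log hg0.ne')
  refine (hA.mul_const u).add (hT.mul_const v) |>.congr_deriv ?_
  set c := 1 - 3 * f s - 2 * g s with hc_def
  have := hc.ne'
  field_simp
  rw [hc_def]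
  ring

end Curve

lemma add_mul_sub_pos {x y s : ℝ} (hx : 0 < x) (hy : 0 < y) (hs : s ∈ Icc (0 : ℝ) 1) :
    0 < x + s * (y - x) :=
  (convex_Ioi (0 : ℝ)).add_smul_sub_mem hx hy hs

theorem logF_le_tangent {p q a t : ℝ} (hp : 0 < p) (hq : 0 < q) (hpq : 0 < 1 - 3 * p - 2 * q)
    (ha : 0 < a) (ht : 0 < t) (hat : 0 < 1 - 3 * a - 2 * t) :
    logF a t ≤ logF p q + logFPartialA p q * (a - p) + logFPartialT p q * (t - q) := by
  have hA (s : ℝ) : HasDerivAt (fun s => p + s * (a - p)) (a - p) s := by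
    simpa using ((hasDerivAt_id s).mul_const (a - p)).const_add p
  have hT (s : ℝ) : HasDerivAt (fun s => q + s * (t - q)) (t - q) s := by
    simpa using ((hasDerivAt_id s).mul_const (t - q)).const_add q
  have hpos (s : ℝ) (hs : s ∈ Icc (0 : ℝ) 1) : 0 < p + s * (a - p) ∧ 0 < q + s * (t - q) ∧
      0 < 1 - 3 * (p + s * (a - p)) - 2 * (q + s * (t - q)) := by
    refine ⟨add_mul_sub_pos hp ha hs, add_mul_sub_pos hq ht hs, ?_⟩
    linarith [add_mul_sub_pos hpq hat hs]
  have hg' (s : ℝ) (hs : s ∈ Icc (0 : ℝ) 1) :=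
    hasDerivAt_logF_comp (hA s) (hT s) (hpos s hs).1 (hpos s hs).2.1 (hpos s hs).2.2
  have hg'' (s : ℝ) (hs : s ∈ Icc (0 : ℝ) 1) :=
    hasDerivAt_logFPartial_directional (hA s) (hT s) (hpos s hs).1 (hpos s hs).2.1 (hpos s hs).2.2
  have hconcave : ConcaveOn ℝ (Icc 0 1) (fun s => logF (p + s * (a - p)) (q + s * (t - q))) := by
    refine concaveOn_of_hasDerivWithinAt2_nonpos (convex_Icc 0 1)
      (fun s hs => (hg' s hs).continuousAt.continuousWithinAt)
      (fun s hs => (hg' s (interior_subset hs)).hasDerivWithinAt)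
      (fun s hs => (hg'' s (interior_subset hs)).hasDerivWithinAt) fun s hs => ?_
    obtain ⟨hA0, hT0, hC0⟩ := hpos s (interior_subset hs)
    exact neg_nonpos.mpr (by positivity)
  have hslope := hconcave.slope_le_of_hasDerivAt (by simp) (by simp) zero_lt_one (hg' 0 (by simp))
  simp only [slope_def_field, zero_mul, one_mul, add_zero, add_sub_cancel, sub_zero,
    div_one] at hslope
  linarith

local notation "p₀" => (6440807 / 50000000 : ℝ)
local notation "q₀" => (26030337 / 100000000 : ℝ)

lemma log_p₀_bounds : -2.04936917 < log p₀ ∧ log p₀ < -2.04936916 := by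
  have h := abs_log_sub_add_sum_range_le (x := -190807 / 6250000) (by norm_num [abs_of_neg]) 5
  norm_num [Finset.sum_range_succ, abs_le] at h
  rw [show p₀ = 6440807 / 6250000 / 2 ^ 3 by norm_num, log_div (by norm_num) (by norm_num),
    log_pow]
  constructor <;> push_cast <;> linarith [log_two_gt_d9, log_two_lt_d9]

lemma log_q₀_bounds : -1.34590753 < log q₀ ∧ log q₀ < -1.34590751 := by
  have h := abs_log_sub_add_sum_range_le (x := -1030337 / 25000000) (by norm_num [abs_of_neg]) 6
  norm_num [Finset.sum_range_succ, abs_le] at h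
  rw [show q₀ = 26030337 / 25000000 / 2 ^ 2 by norm_num, log_div (by norm_num) (by norm_num),
    log_pow]
  constructor <;> push_cast <;> linarith [log_two_gt_d9, log_two_lt_d9]

lemma log_one_sub_three_p₀_sub_two_q₀_bounds :
    -2.37574909 < log (1 - 3 * p₀ - 2 * q₀) ∧ log (1 - 3 * p₀ - 2 * q₀) < -2.37574907 := by
  have h := abs_log_sub_add_sum_range_le (x := 20129 / 2343750) (by norm_num [abs_of_pos]) 4
  norm_num [Finset.sum_range_succ, abs_le] at h
  rw [show 1 - 3 * p₀ - 2 * q₀ = 3 * (2323621 / 2343750) / 2 ^ 5 by norm_num,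
    log_div (by norm_num) (by norm_num), log_mul (by norm_num) (by norm_num), log_pow]
  constructor <;> push_cast <;>
    linarith [log_two_gt_d9, log_two_lt_d9, log_three_gt_d9, log_three_lt_d9]

lemma log_0_7524_gt : -0.2844872 < log 0.7524 := by
  have h := abs_log_sub_add_sum_range_le (x := -2 / 625) (by norm_num [abs_of_neg]) 3
  norm_num [Finset.sum_range_succ, abs_le] at h
  rw [show (0.7524 : ℝ) = 3 * (627 / 625) / 2 ^ 2 by norm_num,
    log_div (by norm_num) (by norm_num), log_mul (by norm_num) (by norm_num), log_pow]
  push_cast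
  linarith [log_two_gt_d9, log_two_lt_d9, log_three_gt_d9, log_three_lt_d9]

lemma mul_le_of_abs_le {x y ε δ : ℝ} (hx : |x| ≤ ε) (hy : |y| ≤ δ) : x * y ≤ ε * δ :=
  (le_abs_self _).trans ((abs_mul x y).trans_le
    (mul_le_mul hx hy (abs_nonneg y) ((abs_nonneg x).trans hx)))

theorem logF_tangent_at_p₀_q₀_lt {a t : ℝ} (ha : 0 < a) (ha' : a < 1 / 3) (ht : 0 < t)
    (ht' : t < 1 / 2) :
    logF p₀ q₀ + logFPartialA p₀ q₀ * (a - p₀) + logFPartialT p₀ q₀ * (t - q₀) < log 0.7524 := by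
  have h6 : log 6 = log 2 + log 3 := by
    rw [show (6 : ℝ) = 2 * 3 by norm_num, log_mul (by norm_num) (by norm_num)]
  have := log_p₀_bounds
  have := log_q₀_bounds
  have := log_one_sub_three_p₀_sub_two_q₀_bounds
  have := log_two_gt_d9
  have := log_two_lt_d9
  have := log_three_gt_d9
  have := log_three_lt_d9
  have hF : logF p₀ q₀ < -0.2845002 := by
    rw [logF, h6]
    linarith
  have hPA : |logFPartialA p₀ q₀| ≤ 2e-6 := by
    rw [logFPartialA, h6, abs_le]
    constructor <;> linarith
  have hPT : |logFPartialT p₀ q₀| ≤ 1e-6 := by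
    rw [logFPartialT, abs_le]
    constructor <;> linarith
  have hda : |a - p₀| ≤ 1 / 3 := abs_le.mpr ⟨by linarith, by linarith⟩
  have hdt : |t - q₀| ≤ 1 / 2 := abs_le.mpr ⟨by linarith, by linarith⟩
  linarith [mul_le_of_abs_le hPA hda, mul_le_of_abs_le hPT hdt, log_0_7524_gt]

theorem stmt_9_general (x y : ℝ)
    (hy1 : max (3 * x - 1) 0 < y) (hy2 : y < x) :
    ((x - y) / (1 - 3 * x + y)) *
        ((1 - 3 * x + y) / (Real.exp 1 * (x - y) ^ 2)) ^ (2 * x - y) *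
        ((1 - 3 * x + y) / 6) ^ (x - y) *
        ((1 - 3 * x + y) / (2 * y)) ^ y < 0.7524 := by
  obtain ⟨hx, hy⟩ := max_lt_iff.mp hy1
  have ha : 0 < x - y := sub_pos.mpr hy2
  have hc : 0 < 1 - 3 * (x - y) - 2 * y := by linarith
  rw [show 1 - 3 * x + y = 1 - 3 * (x - y) - 2 * y by ring,
    show 2 * x - y = 2 * (x - y) + y by ring, ← exp_logF ha hy hc,
    ← exp_log (show (0 : ℝ) < 0.7524 by norm_num), exp_lt_exp]
  exact (logF_le_tangent (by norm_num) (by norm_num) (by norm_num) ha hy hc).trans_lt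
    (logF_tangent_at_p₀_q₀_lt ha (by linarith) hy (by linarith))

theorem stmt_9 (x y : ℝ) (hx0 : 0 < x) (hx : x < 0.5)
    (hy1 : max (3 * x - 1) 0 < y) (hy2 : y < x) :
    ((x - y) / (1 - 3 * x + y)) *
        ((1 - 3 * x + y) / (Real.exp 1 * (x - y) ^ 2)) ^ (2 * x - y) *
        ((1 - 3 * x + y) / 6) ^ (x - y) *
        ((1 - 3 * x + y) / (2 * y)) ^ y < 0.7524 :=
  stmt_9_general x y hy1 hy2
end

section
/- Let G be a graph and H a hypergraph with V(H) = V(G), and suppose G is d-degenerate. Then (G,H) has a proper conflict-free coloring using at most d + Δ(H) + 1 colors, where Δ(H) is the maximum, over vertices v, of the number of edges of H containing v. -/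
/-!
Remove a vertex `v` with at most `d` neighbours, colour the rest inductively, and fix for every
hyperedge `e ∋ v` meeting the rest a colour `c e` occurring exactly once on it. Giving `v` a
colour outside the at most `d + Δ(H)` colours of its neighbours and of the `c e` keeps the
colouring proper and keeps each `c e` unique; a hyperedge meeting the coloured set only in `v`
is conflict-free because of `v` alone.
-/

open Finset Function

namespace ConflictFree

variable {V α : Type*}

def HasUniqueColor [DecidableEq α] (φ : V → α) (e : Finset V) : Prop :=
  ∃ c, (e.filter fun v => φ v = c).card = 1

lemma hasUniqueColor_singleton [DecidableEq α] (φ : V → α) (v : V) : HasUniqueColor φ {v} :=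
  ⟨φ v, by rw [filter_singleton, if_pos rfl, card_singleton]⟩

variable [DecidableEq V]

lemma filter_update_eq_of_notMem [DecidableEq α] {φ : V → α} {e : Finset V} {v : V}
    (hv : v ∉ e) (x c : α) :
    (e.filter fun w => update φ v x w = c) = e.filter fun w => φ w = c :=
  filter_congr fun w hw => by rw [update_of_ne (ne_of_mem_of_not_mem hw hv)]

lemma HasUniqueColor.update_of_notMem [DecidableEq α] {φ : V → α} {e : Finset V} {v : V}
    (h : HasUniqueColor φ e) (hv : v ∉ e) (x : α) : HasUniqueColor (update φ v x) e := by
  obtain ⟨c, hc⟩ := h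
  exact ⟨c, by rw [filter_update_eq_of_notMem hv, hc]⟩

lemma hasUniqueColor_insert_update [DecidableEq α] {φ : V → α} {e : Finset V} {v : V}
    {x c : α} (hv : v ∉ e) (hc : (e.filter fun w => φ w = c).card = 1) (hx : x ≠ c) :
    HasUniqueColor (update φ v x) (insert v e) :=
  ⟨c, by rw [filter_insert, if_neg (by simpa using hx), filter_update_eq_of_notMem hv, hc]⟩

def IsConflictFreeColoringOn [DecidableEq α] (G : SimpleGraph V) (E : Finset (Finset V))
    (φ : V → α) (s : Finset V) : Prop :=
  (∀ u ∈ s, ∀ w ∈ s, G.Adj u w → φ u ≠ φ w) ∧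
    ∀ e ∈ E, (e ∩ s).Nonempty → HasUniqueColor φ (e ∩ s)

variable {G : SimpleGraph V} {E : Finset (Finset V)}

lemma update_ne_of_adj {φ : V → α} {s : Finset V} {v : V} {x : α}
    (hφ : ∀ u ∈ s, ∀ w ∈ s, G.Adj u w → φ u ≠ φ w) (hv : v ∉ s)
    (hx : ∀ w ∈ s, G.Adj v w → x ≠ φ w) :
    ∀ u ∈ insert v s, ∀ w ∈ insert v s, G.Adj u w →
      update φ v x u ≠ update φ v x w := by
  have hne : ∀ {w}, w ∈ s → w ≠ v := fun hw => ne_of_mem_of_not_mem hw hv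
  intro u hu w hw huw
  rcases mem_insert.1 hu with rfl | hu' <;> rcases mem_insert.1 hw with rfl | hw'
  · exact (huw.ne rfl).elim
  · rw [update_self, update_of_ne (hne hw')]
    exact hx w hw' huw
  · rw [update_self, update_of_ne (hne hu')]
    exact (hx u hu' huw.symm).symm
  · rw [update_of_ne (hne hu'), update_of_ne (hne hw')]
    exact hφ u hu' w hw' huw

lemma IsConflictFreeColoringOn.exists_update_insert [DecidableEq α] [Fintype α]
    [DecidableRel G.Adj] {φ : V → α} {s : Finset V} (hφ : IsConflictFreeColoringOn G E φ s)
    {v : V} (hv : v ∉ s)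
    (hcard : (s.filter fun w => G.Adj v w).card + (E.filter fun e => v ∈ e).card
      < Fintype.card α) :
    ∃ x, IsConflictFreeColoringOn G E (update φ v x) (insert v s) := by
  obtain ⟨hproper, hunique⟩ := hφ
  have : Nonempty α := Fintype.card_pos_iff.1 (by omega)
  choose! c hc using hunique
  set forbidden := (s.filter fun w => G.Adj v w).image φ ∪ (E.filter fun e => v ∈ e).image c
  have hforbidden : forbidden.card < (univ : Finset α).card :=
    (card_union_le _ _).trans_lt <| card_univ (α := α) ▸
      (Nat.add_le_add card_image_le card_image_le).trans_lt hcard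
  obtain ⟨x, -, hx⟩ := exists_mem_notMem_of_card_lt_card hforbidden
  refine ⟨x, update_ne_of_adj hproper hv fun w hw hvw hxw => hx ?_, fun e he hes => ?_⟩
  · exact mem_union_left _ (mem_image.2 ⟨w, mem_filter.2 ⟨hw, hvw⟩, hxw.symm⟩)
  by_cases hve : v ∈ e
  · rw [inter_insert_of_mem hve]
    have hves : v ∉ e ∩ s := fun h => hv (mem_inter.1 h).2
    rcases (e ∩ s).eq_empty_or_nonempty with hempty | hnonempty
    · rw [hempty]
      exact hasUniqueColor_singleton _ v
    · refine hasUniqueColor_insert_update hves (hc e he hnonempty) fun hxc => hx ?_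
      exact mem_union_right _ (mem_image.2 ⟨e, mem_filter.2 ⟨he, hve⟩, hxc.symm⟩)
  · rw [inter_insert_of_notMem hve] at hes ⊢
    exact HasUniqueColor.update_of_notMem ⟨c e, hc e he hes⟩
      (fun h => hve (mem_inter.1 h).1) x

theorem exists_isConflictFreeColoringOn [DecidableEq α] [Fintype α] [DecidableRel G.Adj]
    {d Δ : ℕ}
    (hdeg : ∀ s : Finset V, s.Nonempty → ∃ v ∈ s, (s.filter fun w => G.Adj v w).card ≤ d)
    (hΔ : ∀ v, (E.filter fun e => v ∈ e).card ≤ Δ) (hα : d + Δ < Fintype.card α)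
    (s : Finset V) : ∃ φ : V → α, IsConflictFreeColoringOn G E φ s := by
  induction s using Finset.strongInduction with
  | H s ih =>
    rcases s.eq_empty_or_nonempty with rfl | hs
    · have : Nonempty α := Fintype.card_pos_iff.1 (by omega)
      exact ⟨fun _ => Classical.arbitrary α, by simp [IsConflictFreeColoringOn]⟩
    obtain ⟨v, hvs, hvd⟩ := hdeg s hs
    obtain ⟨φ, hφ⟩ := ih (s.erase v) (erase_ssubset hvs)
    have hdeg_erase : ((s.erase v).filter fun w => G.Adj v w).card ≤ d :=
      (card_le_card (filter_subset_filter _ (erase_subset v s))).trans hvd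
    obtain ⟨x, hx⟩ := hφ.exists_update_insert (notMem_erase v s)
      (by have := hΔ v; omega)
    exact ⟨_, insert_erase hvs ▸ hx⟩

end ConflictFree

open ConflictFree in
theorem stmt_10 {V : Type*} [Fintype V] [DecidableEq V]
    (G : SimpleGraph V) [DecidableRel G.Adj]
    (E : Finset (Finset V)) (hE : ∀ e ∈ E, e.Nonempty)
    (d : ℕ)
    (hdeg : ∀ s : Finset V, s.Nonempty →
      ∃ v ∈ s, (s.filter fun w => G.Adj v w).card ≤ d)
    (ΔH : ℕ) (hΔH : ΔH = Finset.univ.sup fun v : V => (E.filter fun z => v ∈ z).card) :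
    ∃ φ : V → Fin (d + ΔH + 1),
      (∀ u v : V, G.Adj u v → φ u ≠ φ v) ∧
      (∀ e ∈ E, ∃ c : Fin (d + ΔH + 1), (e.filter fun v => φ v = c).card = 1) := by
  have hΔ : ∀ v, (E.filter fun e => v ∈ e).card ≤ ΔH := fun v =>
    hΔH ▸ le_sup (f := fun v : V => (E.filter fun z => v ∈ z).card) (mem_univ v)
  obtain ⟨φ, hproper, hunique⟩ :=
    exists_isConflictFreeColoringOn (α := Fin (d + ΔH + 1)) hdeg hΔ (by simp) univ
  refine ⟨φ, fun u v huv => hproper u (mem_univ u) v (mem_univ v) huv, fun e he => ?_⟩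
  simpa [HasUniqueColor] using hunique e he (by simpa using hE e he)
end

section
/- Let G be a graph, a, b positive integers, and φ a proper (a:b)-coloring of G such that for any two distinct vertices v, w at least b colors appear exactly once on {v,w}. Then |φ(v) ∩ φ(w)| ≤ b/2 for all distinct v, w, and for any three vertices x, y, z with x adjacent to both y and z, |φ(x) ∪ φ(y) ∪ φ(z)| ≥ 5b/2. -/
/-! Two colour sets of size `b` sharing `k` colours have exactly `2 (b - k)` colours appearing once,
so the hypothesis forces `2 k ≤ b`. For a vertex `x` adjacent to `y` and `z`, properness makes `φ x`
disjoint from `φ y ∪ φ z`, and `|φ y ∪ φ z| = 2b - |φ y ∩ φ z| ≥ 3b/2`. -/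

namespace Finset

variable {α : Type*} [DecidableEq α]

theorem card_sdiff_union_sdiff_add_two_mul_card_inter (s t : Finset α) :
    #((s \ t) ∪ (t \ s)) + 2 * #(s ∩ t) = #s + #t := by
  have hs := card_sdiff_add_card_inter s t
  have ht := card_sdiff_add_card_inter t s
  rw [inter_comm] at ht
  rw [card_union_of_disjoint disjoint_sdiff_sdiff]
  omega

theorem two_mul_card_inter_le_of_le_card_sdiff_union_sdiff {s t : Finset α} {b : ℕ}
    (hs : #s = b) (ht : #t = b) (h : b ≤ #((s \ t) ∪ (t \ s))) : 2 * #(s ∩ t) ≤ b := by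
  have := card_sdiff_union_sdiff_add_two_mul_card_inter s t
  omega

theorem card_union_union_of_disjoint {s t u : Finset α} (hst : Disjoint s t) (hsu : Disjoint s u) :
    #(s ∪ t ∪ u) + #(t ∩ u) = #s + #t + #u := by
  rw [union_assoc, card_union_of_disjoint (disjoint_union_right.2 ⟨hst, hsu⟩), add_assoc,
    card_union_add_card_inter, add_assoc]

end Finset

open Finset

theorem stmt_18_general {V : Type*} (G : SimpleGraph V)
    (a b : ℕ)
    (φ : V → Finset (Fin a)) (hcard : ∀ v, (φ v).card = b)
    (hproper : ∀ ℓ : Fin a, ∀ u w : V, G.Adj u w → ¬(ℓ ∈ φ u ∧ ℓ ∈ φ w))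
    (honce : ∀ v w : V, v ≠ w →
      b ≤ ((φ v \ φ w) ∪ (φ w \ φ v)).card) :
    (∀ v w : V, v ≠ w → ((φ v ∩ φ w).card : ℝ) ≤ b / 2) ∧
    (∀ x y z : V, y ≠ z → G.Adj x y → G.Adj x z →
      (5 : ℝ) * b / 2 ≤ ((φ x ∪ φ y ∪ φ z).card : ℝ)) := by
  have overlap : ∀ v w, v ≠ w → 2 * #(φ v ∩ φ w) ≤ b := fun v w hvw =>
    two_mul_card_inter_le_of_le_card_sdiff_union_sdiff (hcard v) (hcard w) (honce v w hvw)
  have disjoint_of_adj : ∀ u w, G.Adj u w → Disjoint (φ u) (φ w) := fun u w huw =>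
    disjoint_left.2 fun ℓ hu hw => hproper ℓ u w huw ⟨hu, hw⟩
  refine ⟨fun v w hvw => ?_, fun x y z hyz hxy hxz => ?_⟩
  · have : (2 * #(φ v ∩ φ w) : ℝ) ≤ b := by exact_mod_cast overlap v w hvw
    linarith
  · have hsum := card_union_union_of_disjoint (disjoint_of_adj x y hxy) (disjoint_of_adj x z hxz)
    rw [hcard, hcard, hcard] at hsum
    have : 5 * b ≤ 2 * #(φ x ∪ φ y ∪ φ z) := by linarith [overlap y z hyz]
    have : (5 * b : ℝ) ≤ 2 * #(φ x ∪ φ y ∪ φ z) := by exact_mod_cast this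
    linarith

theorem stmt_18 {V : Type*} [DecidableEq V] (G : SimpleGraph V)
    (a b : ℕ) (ha : 0 < a) (hb : 0 < b)
    (φ : V → Finset (Fin a)) (hcard : ∀ v, (φ v).card = b)
    (hproper : ∀ ℓ : Fin a, ∀ u w : V, G.Adj u w → ¬(ℓ ∈ φ u ∧ ℓ ∈ φ w))
    (honce : ∀ v w : V, v ≠ w →
      b ≤ ((φ v \ φ w) ∪ (φ w \ φ v)).card) :
    (∀ v w : V, v ≠ w → ((φ v ∩ φ w).card : ℝ) ≤ b / 2) ∧
    (∀ x y z : V, y ≠ z → G.Adj x y → G.Adj x z →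
      (5 : ℝ) * b / 2 ≤ ((φ x ∪ φ y ∪ φ z).card : ℝ)) :=
  stmt_18_general G a b φ hcard hproper honce
end
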